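/- arXiv:1708.05041 — 5 statements merged into one kernel-verified Lean document; each statement's English description precedes it below -/
import Mathlib

section
/- If G is a finite simple graph without isolated vertices, then F_t(G) ≤ 2·F(G), i.e., the total forcing number of G is at most twice the forcing number of G. -/
/-- A set `T` of (colored) vertices is closed under the forcing rule: whenever a colored
vertex `v ∈ T` has the property that all of its neighbors outside `T` are equal to `w`
(i.e. `w` is its unique non-colored neighbor, if `w ∉ T`), then `w ∈ T`. -/
def ForcingClosed {V : Type*} (G : SimpleGraph V) (T : Set V) : Prop :=
  ∀ v ∈ T, ∀ w, G.Adj v w → (∀ u, G.Adj v u → u ∉ T → u = w) → w ∈ T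

/-- `S` is a (zero) forcing set of `G`: iterating the forcing process starting from `S`
colors all vertices; equivalently, every forcing-closed superset of `S` is everything. -/
def IsForcingSet {V : Type*} (G : SimpleGraph V) (S : Set V) : Prop :=
  ∀ T : Set V, S ⊆ T → ForcingClosed G T → ∀ v, v ∈ T

/-- `S` is a total forcing set of `G`: a forcing set whose induced subgraph has no
isolated vertex. -/
def IsTotalForcingSet {V : Type*} (G : SimpleGraph V) (S : Set V) : Prop :=
  IsForcingSet G S ∧ ∀ v ∈ S, ∃ w ∈ S, G.Adj v w

/-- The forcing number `F(G)`: minimum cardinality of a forcing set. -/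
noncomputable def forcingNumber {V : Type*} (G : SimpleGraph V) : ℕ :=
  sInf {n : ℕ | ∃ S : Set V, IsForcingSet G S ∧ S.ncard = n}

/-- The total forcing number `F_t(G)`: minimum cardinality of a total forcing set. -/
noncomputable def totalForcingNumber {V : Type*} (G : SimpleGraph V) : ℕ :=
  sInf {n : ℕ | ∃ S : Set V, IsTotalForcingSet G S ∧ S.ncard = n}

/-- If `G` is a finite simple graph without isolated vertices, then `F_t(G) ≤ 2 F(G)`. -/
theorem totalForcingNumber_le_two_mul_forcingNumber {V : Type*} [Fintype V]
    (G : SimpleGraph V) (hG : ∀ v : V, ∃ w, G.Adj v w) :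
    totalForcingNumber G ≤ 2 * forcingNumber G := by
  classical
  have hne : {n : ℕ | ∃ S : Set V, IsForcingSet G S ∧ S.ncard = n}.Nonempty := by
    exact ⟨(Set.univ : Set V).ncard, Set.univ, fun T hT _ v => hT (Set.mem_univ v), rfl⟩
  obtain ⟨S, hS, hScard⟩ := Nat.sInf_mem hne
  choose f hf using hG
  set S' : Set V := S ∪ (f '' S) with hS'def
  have hsub : S ⊆ S' := Set.subset_union_left
  have hforcing : IsForcingSet G S' :=
    fun T hT hcl v => hS T (hsub.trans hT) hcl v
  have htotal : IsTotalForcingSet G S' := by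
    refine ⟨hforcing, fun v hv => ?_⟩
    rcases hv with hv | ⟨u, hu, rfl⟩
    · exact ⟨f v, Or.inr ⟨v, hv, rfl⟩, hf v⟩
    · exact ⟨u, Or.inl hu, (hf u).symm⟩
  have hcard : S'.ncard ≤ 2 * S.ncard := by
    have h1 : S'.ncard ≤ S.ncard + (f '' S).ncard :=
      Set.ncard_union_le S (f '' S)
    have h2 : (f '' S).ncard ≤ S.ncard := Set.ncard_image_le (S.toFinite)
    omega
  calc totalForcingNumber G ≤ S'.ncard := Nat.sInf_le ⟨S', htotal, rfl⟩
    _ ≤ 2 * S.ncard := hcard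
    _ = 2 * forcingNumber G := by rw [hScard]; rfl
end

section
/- If G is a connected cubic graph of order n that has a spanning 2-factor consisting of triangles, then F_t(G) ≤ n/2. -/
/-- `G` is cubic (3-regular): every vertex has exactly 3 neighbors. -/
def IsCubic {V : Type*} (G : SimpleGraph V) : Prop := ∀ v, (G.neighborSet v).ncard = 3

/-- `G` has a spanning 2-factor consisting of triangles: a spanning 2-regular subgraph
each of whose components is a triangle (equivalently, a 2-regular spanning subgraph in
which every vertex lies in a triangle). -/
def HasTriangleTwoFactor {V : Type*} (G : SimpleGraph V) : Prop :=
  ∃ H : SimpleGraph V, H ≤ G ∧ (∀ v, (H.neighborSet v).ncard = 2) ∧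
    ∀ v, ∃ a b, H.Adj v a ∧ H.Adj v b ∧ H.Adj a b


section Helpers


private lemma flip_count {V : Type*} [Fintype V] [DecidableEq V] (m : V → V)
    (hm : ∀ v, m (m v) = v) (P P' : V → Prop) [DecidablePred P] [DecidablePred P']
    (hsym : ∀ v, P v ↔ P (m v)) (T3 : Finset V) (hd : ∀ u ∈ T3, m u ∉ T3)
    (hf1 : ∀ u ∈ T3, (P' u ↔ ¬ P u)) (hf2 : ∀ u, m u ∈ T3 → (P' u ↔ ¬ P u))
    (hf3 : ∀ u, u ∉ T3 → m u ∉ T3 → (P' u ↔ P u)) :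
    (Finset.univ.filter P').card + 2 * (T3.filter P).card
      = (Finset.univ.filter P).card + 2 * (T3.filter fun u => ¬ P u).card := by
  classical
  have hinj : Function.Injective m := fun x y h => by rw [← hm x, h, hm]
  set M3 := T3.image m with hM3
  have hmemM3 : ∀ u, u ∈ M3 ↔ m u ∈ T3 := by
    intro u
    constructor
    · rintro hu
      obtain ⟨w, hw, rfl⟩ := Finset.mem_image.mp hu
      rwa [hm]
    · intro hu
      exact Finset.mem_image.mpr ⟨m u, hu, hm u⟩
  have hdisj : Disjoint T3 M3 := by
    rw [Finset.disjoint_left]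
    intro u hu hu'
    exact hd u hu ((hmemM3 u).mp hu')
  have hsym' : ∀ u, P (m u) ↔ P u := by
    intro u
    have h := hsym (m u)
    rw [hm u] at h
    exact h
  have hsplit : ∀ (Q : V → Prop) [DecidablePred Q], (Finset.univ.filter Q).card
      = (T3.filter Q).card + ((M3.filter Q).card + ((Finset.univ \ (T3 ∪ M3)).filter Q).card) := by
    intro Q _
    have h1 : Finset.univ.filter Q
        = (T3.filter Q) ∪ ((M3.filter Q) ∪ ((Finset.univ \ (T3 ∪ M3)).filter Q)) := by
      rw [← Finset.filter_union, ← Finset.filter_union]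
      congr 1
      rw [← Finset.union_assoc, Finset.union_sdiff_of_subset (Finset.subset_univ _)]
    have hdA : Disjoint T3 (Finset.univ \ (T3 ∪ M3)) :=
      Finset.disjoint_sdiff.mono_left Finset.subset_union_left
    have hdB : Disjoint M3 (Finset.univ \ (T3 ∪ M3)) :=
      Finset.disjoint_sdiff.mono_left Finset.subset_union_right
    have hd2 : Disjoint (M3.filter Q) ((Finset.univ \ (T3 ∪ M3)).filter Q) :=
      Finset.disjoint_filter_filter hdB
    have hd1 : Disjoint (T3.filter Q) ((M3.filter Q) ∪ ((Finset.univ \ (T3 ∪ M3)).filter Q)) :=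
      Finset.disjoint_union_right.mpr
        ⟨Finset.disjoint_filter_filter hdisj, Finset.disjoint_filter_filter hdA⟩
    rw [h1, Finset.card_union_of_disjoint hd1, Finset.card_union_of_disjoint hd2]
  have e1 : T3.filter P' = T3.filter (fun u => ¬ P u) :=
    Finset.filter_congr (fun u hu => hf1 u hu)
  have e2 : M3.filter P' = (T3.filter (fun u => ¬ P u)).image m := by
    ext u
    simp only [Finset.mem_filter, Finset.mem_image]
    constructor
    · rintro ⟨hu, hPu⟩
      have hmu : m u ∈ T3 := (hmemM3 u).mp hu
      refine ⟨m u, ⟨hmu, ?_⟩, hm u⟩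
      have hnu : ¬ P u := (hf2 u hmu).mp hPu
      intro hP
      exact hnu ((hsym' u).mp hP)
    · rintro ⟨w, ⟨hwT, hPw⟩, rfl⟩
      refine ⟨Finset.mem_image_of_mem m hwT, ?_⟩
      apply (hf2 (m w) (by rwa [hm])).mpr
      intro hP
      exact hPw ((hsym' w).mp hP)
  have e3 : M3.filter P = (T3.filter P).image m := by
    ext u
    simp only [Finset.mem_filter, Finset.mem_image]
    constructor
    · rintro ⟨hu, hPu⟩
      exact ⟨m u, ⟨(hmemM3 u).mp hu, (hsym' u).mpr hPu⟩, hm u⟩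
    · rintro ⟨w, ⟨hwT, hPw⟩, rfl⟩
      exact ⟨Finset.mem_image_of_mem m hwT, (hsym' w).mpr hPw⟩
  have e4 : ((Finset.univ \ (T3 ∪ M3)).filter P') = ((Finset.univ \ (T3 ∪ M3)).filter P) := by
    refine Finset.filter_congr ?_
    intro u hu
    rw [Finset.mem_sdiff, Finset.mem_union] at hu
    push_neg at hu
    exact hf3 u hu.2.1 (fun h => hu.2.2 ((hmemM3 u).mpr h))
  rw [hsplit P', hsplit P, e1, e2, e3, e4,
    Finset.card_image_of_injective _ hinj, Finset.card_image_of_injective _ hinj]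
  omega

private lemma bool_eq_of_ne : ∀ x p q : Bool, p ≠ x → q ≠ x → p = q := by decide

private lemma bool_flip1 : ∀ p q : Bool, ((!p) = q ↔ ¬ (p = q)) := by decide

private lemma bool_flip2 : ∀ p q : Bool, (p = !q ↔ ¬ (p = q)) := by decide

end Helpers


/-- If `G` is a connected cubic graph of order `n` having a spanning 2-factor consisting
of triangles, then `F_t(G) ≤ n/2`. -/
theorem totalForcingNumber_le_half_of_triangleTwoFactor {V : Type*} [Fintype V]
    (G : SimpleGraph V) (hconn : G.Connected) (hcubic : IsCubic G)
    (h2f : HasTriangleTwoFactor G) :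
    2 * totalForcingNumber G ≤ Fintype.card V := by
  classical
  obtain ⟨H, hHG, hH2, hHt⟩ := h2f
  choose a b ha hb hab using hHt
  have pairEq : ∀ (w x y : V), x ≠ y → H.Adj w x → H.Adj w y →
      H.neighborSet w = {x, y} := by
    intro w x y hxy hx hy
    refine (Set.eq_of_subset_of_ncard_le ?_ ?_ (Set.toFinite _)).symm
    · intro u hu
      simp only [Set.mem_insert_iff, Set.mem_singleton_iff] at hu
      rcases hu with rfl | rfl
      · exact hx
      · exact hy
    · rw [hH2 w, Set.ncard_pair hxy]
  have hNH : ∀ v, H.neighborSet v = {a v, b v} :=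
    fun v => pairEq v _ _ (hab v).ne (ha v) (hb v)
  have hNA : ∀ v, H.neighborSet (a v) = {v, b v} :=
    fun v => pairEq _ _ _ (hb v).ne (ha v).symm (hab v)
  have hNB : ∀ v, H.neighborSet (b v) = {v, a v} :=
    fun v => pairEq _ _ _ (ha v).ne (hb v).symm (hab v).symm
  have hHcases : ∀ v u, H.Adj v u → u = a v ∨ u = b v := by
    intro v u hu
    have h : u ∈ H.neighborSet v := hu
    rw [hNH v] at h
    simpa using h
  have hAcases : ∀ v u, H.Adj (a v) u → u = v ∨ u = b v := by
    intro v u hu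
    have h : u ∈ H.neighborSet (a v) := hu
    rw [hNA v] at h
    simpa using h
  have hBcases : ∀ v u, H.Adj (b v) u → u = v ∨ u = a v := by
    intro v u hu
    have h : u ∈ H.neighborSet (b v) := hu
    rw [hNB v] at h
    simpa using h
  have hsub : ∀ v, H.neighborSet v ⊆ G.neighborSet v := fun v u hu => hHG hu
  have hex : ∀ v, ∃ w, G.neighborSet v \ H.neighborSet v = {w} := by
    intro v
    apply Set.ncard_eq_one.mp
    rw [Set.ncard_diff (hsub v) (Set.toFinite _), hcubic v, hH2 v]
  choose M hM using hex
  have hMmem : ∀ v, M v ∈ G.neighborSet v \ H.neighborSet v := by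
    intro v
    rw [hM v]
    exact rfl
  have hMadj : ∀ v, G.Adj v (M v) := fun v => (hMmem v).1
  have hMnH : ∀ v, ¬ H.Adj v (M v) := fun v => (hMmem v).2
  have hMM : ∀ v, M (M v) = v := by
    intro v
    have h1 : v ∈ G.neighborSet (M v) \ H.neighborSet (M v) :=
      ⟨(hMadj v).symm, fun hc => hMnH v hc.symm⟩
    rw [hM (M v)] at h1
    exact (Set.mem_singleton_iff.mp h1).symm
  have hcases : ∀ v u, G.Adj v u → H.Adj v u ∨ u = M v := by
    intro v u hu
    by_cases h : H.Adj v u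
    · exact Or.inl h
    · right
      have h2 : u ∈ G.neighborSet v \ H.neighborSet v := ⟨hu, h⟩
      rw [hM v] at h2
      exact h2
  -- triangle finsets
  letI : DecidableEq V := Classical.decEq V
  have htchar : ∀ w u, u ∈ ({w, a w, b w} : Finset V) ↔ (u = w ∨ H.Adj w u) := by
    intro w u
    simp only [Finset.mem_insert, Finset.mem_singleton]
    constructor
    · rintro (rfl | rfl | rfl)
      · exact Or.inl rfl
      · exact Or.inr (ha w)
      · exact Or.inr (hb w)
    · rintro (rfl | h)
      · exact Or.inl rfl
      · rcases hHcases w u h with rfl | rfl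
        · exact Or.inr (Or.inl rfl)
        · exact Or.inr (Or.inr rfl)
  have htsymm : ∀ u w, u ∈ ({w, a w, b w} : Finset V) → w ∈ ({u, a u, b u} : Finset V) := by
    intro u w h
    rw [htchar] at h ⊢
    rcases h with rfl | h
    · exact Or.inl rfl
    · exact Or.inr h.symm
  have hblock : ∀ w u, u ∈ ({w, a w, b w} : Finset V) →
      ({u, a u, b u} : Finset V) = ({w, a w, b w} : Finset V) := by
    intro w u hu
    rw [htchar] at hu
    rcases hu with rfl | hu
    · rfl
    · rcases hHcases w u hu with rfl | rfl
      · ext x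
        rw [htchar, htchar]
        constructor
        · rintro (rfl | h)
          · exact Or.inr (ha w)
          · rcases hAcases w x h with rfl | rfl
            · exact Or.inl rfl
            · exact Or.inr (hb w)
        · rintro (rfl | h)
          · exact Or.inr (ha x).symm
          · rcases hHcases w x h with rfl | rfl
            · exact Or.inl rfl
            · exact Or.inr (hab w)
      · ext x
        rw [htchar, htchar]
        constructor
        · rintro (rfl | h)
          · exact Or.inr (hb w)
          · rcases hBcases w x h with rfl | rfl
            · exact Or.inl rfl
            · exact Or.inr (ha w)
        · rintro (rfl | h)
          · exact Or.inr (hb x).symm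
          · rcases hHcases w x h with rfl | rfl
            · exact Or.inr (hab w).symm
            · exact Or.inl rfl
  have hMnott : ∀ v, M v ∉ ({v, a v, b v} : Finset V) := by
    intro v h
    rw [htchar] at h
    rcases h with h | h
    · exact (hMadj v).ne' h
    · exact hMnH v h
  -- minimize monochromatic matching edges over triangle-constant colorings
  obtain ⟨f, hQ, hcost⟩ := Nat.sInf_mem (s := {n : ℕ | ∃ f : V → Bool,
      (∀ v, f (a v) = f v ∧ f (b v) = f v) ∧
      (Finset.univ.filter fun v => f v = f (M v)).card = n})
    ⟨_, fun _ => true, fun _ => ⟨rfl, rfl⟩, rfl⟩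
  have hA1 : ∀ v, (({v, a v, b v} : Finset V).filter fun u => f u = f (M u)).card ≤ 1 := by
    by_contra hcon
    push_neg at hcon
    obtain ⟨v₀, hv₀⟩ := hcon
    set T3 : Finset V := {v₀, a v₀, b v₀} with hT3def
    have hmema : ∀ u, a u ∈ ({u, a u, b u} : Finset V) :=
      fun u => (htchar u (a u)).mpr (Or.inr (ha u))
    have hmemb : ∀ u, b u ∈ ({u, a u, b u} : Finset V) :=
      fun u => (htchar u (b u)).mpr (Or.inr (hb u))
    have hblockT : ∀ u ∈ T3, ({u, a u, b u} : Finset V) = T3 := by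
      intro u hu
      rw [hT3def] at hu ⊢
      exact hblock v₀ u hu
    have hmemT : ∀ u ∈ T3, a u ∈ T3 ∧ b u ∈ T3 := by
      intro u hu
      rw [← hblockT u hu]
      exact ⟨hmema u, hmemb u⟩
    have hnotT : ∀ u, u ∉ T3 → a u ∉ T3 ∧ b u ∉ T3 := by
      intro u hu
      constructor
      · intro h
        apply hu
        rw [← hblockT (a u) h]
        exact htsymm (a u) u (hmema u)
      · intro h
        apply hu
        rw [← hblockT (b u) h]
        exact htsymm (b u) u (hmemb u)
    have hMT : ∀ u ∈ T3, M u ∉ T3 := by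
      intro u hu h
      rw [← hblockT u hu] at h
      exact hMnott u h
    set f' : V → Bool := fun u => if u ∈ T3 then !(f u) else f u with hf'def
    have hQ' : ∀ v, f' (a v) = f' v ∧ f' (b v) = f' v := by
      intro v
      by_cases hv : v ∈ T3
      · obtain ⟨h1, h2⟩ := hmemT v hv
        simp only [hf'def, if_pos hv, if_pos h1, if_pos h2]
        exact ⟨congrArg Bool.not (hQ v).1, congrArg Bool.not (hQ v).2⟩
      · obtain ⟨h1, h2⟩ := hnotT v hv
        simp only [hf'def, if_neg hv, if_neg h1, if_neg h2]
        exact hQ v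
    have hMT' : ∀ u, M u ∈ T3 → u ∉ T3 := by
      intro u hMu hu
      exact hMT u hu hMu
    have key := flip_count M hMM (fun v => f v = f (M v)) (fun v => f' v = f' (M v))
      (by
        intro v
        show f v = f (M v) ↔ f (M v) = f (M (M v))
        rw [hMM v]
        exact eq_comm)
      T3 hMT
      (by
        intro u hu
        simp only [hf'def, if_pos hu, if_neg (hMT u hu)]
        exact bool_flip1 _ _)
      (by
        intro u hu
        simp only [hf'def, if_neg (hMT' u hu), if_pos hu]
        exact bool_flip2 _ _)
      (by
        intro u hu1 hu2
        simp only [hf'def, if_neg hu1, if_neg hu2])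
    beta_reduce at key
    have hmin : sInf {n : ℕ | ∃ f : V → Bool,
        (∀ v, f (a v) = f v ∧ f (b v) = f v) ∧
        (Finset.univ.filter fun v => f v = f (M v)).card = n}
        ≤ (Finset.univ.filter fun v => f' v = f' (M v)).card :=
      Nat.sInf_le ⟨f', hQ', rfl⟩
    have hsum : (T3.filter fun u => f u = f (M u)).card
        + (T3.filter fun u => ¬ (f u = f (M u))).card = T3.card :=
      Finset.card_filter_add_card_filter_not (fun u => f u = f (M u))
    have hT3le : T3.card ≤ 3 := by
      have h1 : ({b v₀} : Finset V).card = 1 := Finset.card_singleton _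
      have h2 := Finset.card_insert_le (a v₀) ({b v₀} : Finset V)
      have h3 := Finset.card_insert_le v₀ ({a v₀, b v₀} : Finset V)
      rw [hT3def]
      clear * - h1 h2 h3
      omega
    have hle : (Finset.univ.filter fun v => f v = f (M v)).card
        ≤ (Finset.univ.filter fun v => f' v = f' (M v)).card := by
      rw [hcost]
      exact hmin
    clear * - hv₀ key hsum hT3le hle
    omega
  -- pick the smaller colour class
  have hsplitc : (Finset.univ.filter fun v => f v = true).card
      + (Finset.univ.filter fun v => f v = false).card = Fintype.card V := by
    have h := Finset.card_filter_add_card_filter_not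
      (s := (Finset.univ : Finset V)) (fun v => f v = true)
    simp only [Bool.not_eq_true, Finset.card_univ] at h
    exact h
  obtain ⟨x, hx⟩ : ∃ x : Bool, 2 * (Finset.univ.filter fun v => f v = x).card
      ≤ Fintype.card V := by
    rcases le_total ((Finset.univ.filter fun v => f v = true).card)
      ((Finset.univ.filter fun v => f v = false).card) with h | h
    · exact ⟨true, by clear * - hsplitc h; omega⟩
    · exact ⟨false, by clear * - hsplitc h; omega⟩
  -- at most one monochromatic matching edge per triangle
  have hgood : ∀ v u₁ u₂, u₁ ∈ ({v, a v, b v} : Finset V) → u₂ ∈ ({v, a v, b v} : Finset V) →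
      u₁ ≠ u₂ → f u₁ = f (M u₁) → f u₂ = f (M u₂) → False := by
    intro v u₁ u₂ h1 h2 hne p1 p2
    have hlt : 1 < (({v, a v, b v} : Finset V).filter fun u => f u = f (M u)).card :=
      Finset.one_lt_card.mpr ⟨u₁, Finset.mem_filter.mpr ⟨h1, p1⟩,
        u₂, Finset.mem_filter.mpr ⟨h2, p2⟩, hne⟩
    exact absurd hlt (not_lt.mpr (hA1 v))
  set S : Set V := {v | f v = x} with hSdef
  have hST : IsTotalForcingSet G S := by
    constructor
    · intro T hsT hcl v
      have step1 : ∀ s, f s = x → M s ∈ T := by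
        intro s hs
        refine hcl s (hsT hs) (M s) (hMadj s) ?_
        intro u hu hut
        rcases hcases s u hu with h | rfl
        · exfalso
          rcases hHcases s u h with rfl | rfl
          · exact hut (hsT (show f (a s) = x from ((hQ s).1).trans hs))
          · exact hut (hsT (show f (b s) = x from ((hQ s).2).trans hs))
        · rfl
      have step2 : ∀ w, f (M w) = x → w ∈ T := by
        intro w h
        have h2 := step1 (M w) h
        rwa [hMM w] at h2
      by_cases hv : f v = x
      · exact hsT hv
      · by_cases h1 : f (M v) = x
        · exact step2 v h1
        · have hPv : f v = f (M v) := bool_eq_of_ne x (f v) (f (M v)) hv h1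
          have hav : f (M (a v)) = x := by
            by_contra hcon2
            have h2 : f (a v) = f v := (hQ v).1
            have hPa : f (a v) = f (M (a v)) := by
              rw [h2]
              exact bool_eq_of_ne x (f v) (f (M (a v))) hv hcon2
            exact hgood v v (a v) ((htchar v v).mpr (Or.inl rfl))
              ((htchar v (a v)).mpr (Or.inr (ha v))) (ha v).ne hPv hPa
          have hbv : f (M (b v)) = x := by
            by_contra hcon2
            have h2 : f (b v) = f v := (hQ v).2
            have hPb : f (b v) = f (M (b v)) := by
              rw [h2]
              exact bool_eq_of_ne x (f v) (f (M (b v))) hv hcon2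
            exact hgood v v (b v) ((htchar v v).mpr (Or.inl rfl))
              ((htchar v (b v)).mpr (Or.inr (hb v))) (hb v).ne hPv hPb
          have haT : a v ∈ T := step2 _ hav
          refine hcl (a v) haT v (hHG (ha v).symm) ?_
          intro u hu hut
          rcases hcases (a v) u hu with h | rfl
          · rcases hAcases v u h with rfl | rfl
            · rfl
            · exact absurd (step2 _ hbv) hut
          · exact absurd (hsT hav) hut
    · intro v hv
      exact ⟨a v, (hQ v).1.trans hv, hHG (ha v)⟩
  have hSn : S.ncard = (Finset.univ.filter fun v => f v = x).card := by
    have h : S = ↑(Finset.univ.filter fun v => f v = x) := by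
      ext v
      simp [hSdef]
    rw [h, Set.ncard_coe_finset]
  have htfn : totalForcingNumber G ≤ S.ncard :=
    Nat.sInf_le ⟨S, hST, rfl⟩
  rw [hSn] at htfn
  clear * - htfn hx
  omega
end

section
/- If G is a connected cubic graph of order n that has a spanning 2-factor consisting of triangles, then F_t(G) = n/2 if and only if G is isomorphic to the prism C_3 □ K_2. -/
/-- The prism `C₃ □ K₂`, the Cartesian (box) product of a 3-cycle with `K₂`. -/
def prism : SimpleGraph (Fin 3 × Fin 2) :=
  (SimpleGraph.cycleGraph 3).boxProd (⊤ : SimpleGraph (Fin 2))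

/-! The edges outside the triangle 2-factor form a perfect matching `v ↦ mate v`, and the
triangles are linked by matching edges. With only two triangles `G` is the prism; a triangle
is then a total forcing set, and none smaller exists because a set of at most two vertices of a
cubic graph cannot force anything.

With more triangles, enumerate them breadth first from two adjacent ones and call a vertex
backward when its mate lies in an earlier triangle. The mate map exchanges backward and other
vertices, so exactly `n / 2` vertices are not backward. Backward vertices are forced along
their matching edges from earlier triangles, so it suffices to color the first triangle and,
in every later triangle with a single backward vertex, the two other vertices; these are all
non-backward. Coloring only two vertices of the first triangle together with `mate a`, and
letting `mate a` force a vertex of its own triangle, saves one vertex: `F_t(G) ≤ n / 2 - 1`.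
-/

namespace SimpleGraph

variable {α : Type*} {Γ : SimpleGraph α}

theorem Connected.mem_of_adj_closed (hΓ : Γ.Connected) {K : Set α}
    (hK : ∀ u w, Γ.Adj u w → u ∈ K → w ∈ K) {a : α} (ha : a ∈ K) (v : α) : v ∈ K := by
  induction (reachable_iff_reflTransGen a v).1 (hΓ a v) with
  | refl => exact ha
  | tail _ huw hu => exact hK _ _ huw hu

/-- A breadth-first enumeration: order by distance from `a`, break ties by an arbitrary
enumeration, and move `a` and `b` to the front. -/
theorem Connected.exists_injective_rank [Finite α] (hΓ : Γ.Connected) {a b : α}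
    (hab : Γ.Adj a b) :
    ∃ r : α → ℕ, r.Injective ∧ r a = 0 ∧ r b = 1 ∧ ∀ x, x ≠ a → ∃ y, Γ.Adj x y ∧ r y < r x := by
  classical
  set N := Nat.card α
  let e := Finite.equivFin α
  have lex : ∀ {d d' : ℕ} (i : Fin N) (j : ℕ), d < d' → N * d + i < N * d' + j := by
    intro d d' i j h
    have := Nat.mul_le_mul_left N (Nat.succ_le_of_lt h)
    rw [Nat.mul_succ] at this
    omega
  let r : α → ℕ := fun x => if x = a then 0 else if x = b then 1 else N * Γ.dist x a + e x + 2
  have hr : ∀ x, x ≠ a → x ≠ b → r x = N * Γ.dist x a + e x + 2 := fun x ha hb => by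
    simp [r, ha, hb]
  refine ⟨r, fun x y hxy => ?_, by simp [r], by simp [r, hab.ne'], fun x hxa => ?_⟩
  · by_cases hxa : x = a <;> by_cases hya : y = a <;> by_cases hxb : x = b <;>
      by_cases hyb : y = b <;> simp_all [r]
    rcases lt_trichotomy (Γ.dist x a) (Γ.dist y a) with h | h | h
    · exact absurd hxy (lex (e x) (e y) h).ne
    · rw [h] at hxy
      exact e.injective (Fin.ext (by omega))
    · exact absurd hxy (lex (e y) (e x) h).ne'
  by_cases hxb : x = b
  · subst hxb
    exact ⟨a, hab.symm, by simp [r, hab.ne']⟩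
  obtain ⟨w, hw⟩ := hΓ.exists_walk_length_eq_dist x a
  cases w with
  | nil => exact absurd rfl hxa
  | cons hxy w =>
    rename_i y
    refine ⟨y, hxy, ?_⟩
    have hd : Γ.dist y a < Γ.dist x a := by
      have := dist_le w
      rw [Walk.length_cons] at hw
      omega
    rw [hr x hxa hxb]
    by_cases hya : y = a
    · simp [r, hya]
    by_cases hyb : y = b
    · simp [r, hyb, hab.ne']
    rw [hr y hya hyb]
    have := lex (e y) (e x) hd
    omega

end SimpleGraph

namespace IsCubic

variable {V : Type*} [Finite V] {G : SimpleGraph V}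

theorem forcingClosed_of_ncard_le_two (hG : IsCubic G) {S : Set V} (hS : S.ncard ≤ 2) :
    ForcingClosed G S := by
  intro v hv w hvw hw
  by_contra hwS
  have hsub : G.neighborSet v \ {w} ⊆ S \ {v} := fun u ⟨hu, huw⟩ =>
    ⟨by_contra fun huS => huw (hw u hu huS), fun huv => G.irrefl (huv ▸ hu)⟩
  have h1 := Set.ncard_le_ncard hsub
  have h2 := Set.ncard_sdiff_singleton_add_one (s := G.neighborSet v) hvw
  have h3 := Set.ncard_sdiff_singleton_add_one hv
  rw [hG v] at h2
  omega

theorem three_le_ncard_of_isForcingSet [Nonempty V] (hG : IsCubic G) {S : Set V}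
    (hS : IsForcingSet G S) : 3 ≤ S.ncard := by
  by_contra! hlt
  obtain ⟨v⟩ := ‹Nonempty V›
  have hall := hS S subset_rfl (hG.forcingClosed_of_ncard_le_two (by omega))
  have := Set.ncard_le_ncard (s := insert v (G.neighborSet v)) fun u _ => hall u
  rw [Set.ncard_insert_of_notMem G.notMem_neighborSet_self, hG v] at this
  omega

end IsCubic

theorem prism_adj_iff {x y : Fin 3 × Fin 2} :
    prism.Adj x y ↔ (x.1 ≠ y.1 ∧ x.2 = y.2) ∨ (x.1 = y.1 ∧ x.2 ≠ y.2) := by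
  have hcyc : ∀ i j : Fin 3, (SimpleGraph.cycleGraph 3).Adj i j ↔ i ≠ j := by decide
  rw [prism, SimpleGraph.boxProd_adj, hcyc, SimpleGraph.top_adj]
  tauto

/-- The triangles of a triangle 2-factor of a cubic graph, together with the perfect matching
formed by the remaining edges; `mate v` is the partner of `v` in that matching. -/
structure TriangleDecomposition {V : Type*} (G : SimpleGraph V) where
  tri : V → Set V
  mate : V → V
  mem_tri_self (v : V) : v ∈ tri v
  tri_eq_of_mem {u v : V} : u ∈ tri v → tri u = tri v
  ncard_tri (v : V) : (tri v).ncard = 3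
  adj_iff {v w : V} : G.Adj v w ↔ (w ∈ tri v ∧ w ≠ v) ∨ w = mate v
  mate_notMem_tri (v : V) : mate v ∉ tri v

theorem IsCubic.nonempty_triangleDecomposition {V : Type*} {G : SimpleGraph V}
    (hG : IsCubic G) (h : HasTriangleTwoFactor G) : Nonempty (TriangleDecomposition G) := by
  obtain ⟨H, hHG, hdeg, htri⟩ := h
  have hfin : ∀ v, (H.neighborSet v).Finite := fun v =>
    Set.finite_of_ncard_ne_zero (by rw [hdeg]; norm_num)
  have hnbr : ∀ {v x y}, H.Adj v x → H.Adj v y → H.Adj x y → H.neighborSet v = {x, y} :=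
    fun hx hy hxy => (Set.eq_of_subset_of_ncard_le (by rintro u (rfl | rfl) <;> assumption)
      (by rw [hdeg, Set.ncard_pair hxy.ne]) (hfin _)).symm
  have htri_eq : ∀ {v x y}, H.Adj v x → H.Adj v y → H.Adj x y →
      insert x (H.neighborSet x) = insert v (H.neighborSet v) := fun hx hy hxy => by
    rw [hnbr hx hy hxy, hnbr hx.symm hxy hy, Set.insert_comm]
  have hmate : ∀ v, (G.neighborSet v \ H.neighborSet v).ncard = 1 := fun v => by
    rw [Set.ncard_sdiff (s := H.neighborSet v) (t := G.neighborSet v) (fun _ hu => hHG hu)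
      (hfin v), hG v, hdeg]
  choose mate hmate using fun v => Set.ncard_eq_one.1 (hmate v)
  have hmate_mem : ∀ {v w}, w ∈ G.neighborSet v \ H.neighborSet v ↔ w = mate v := fun {v w} => by
    rw [hmate v, Set.mem_singleton_iff]
  refine ⟨⟨fun v => insert v (H.neighborSet v), mate, fun v => Set.mem_insert v _, ?_, fun v => ?_,
    ?_, fun v => ?_⟩⟩
  · rintro u v (rfl | hvu)
    · rfl
    obtain ⟨x, y, hx, hy, hxy⟩ := htri v
    rw [hnbr hx hy hxy] at hvu
    rcases hvu with rfl | rfl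
    · exact htri_eq hx hy hxy
    · exact htri_eq hy hx hxy.symm
  · rw [Set.ncard_insert_of_notMem H.notMem_neighborSet_self (hfin v), hdeg]
  · intro v w
    have hH : w ∈ insert v (H.neighborSet v) ∧ w ≠ v ↔ H.Adj v w :=
      ⟨fun ⟨hw, hwv⟩ => hw.resolve_left hwv, fun hw => ⟨Or.inr hw, hw.ne'⟩⟩
    rw [hH, ← hmate_mem]
    exact ⟨fun hw => (em (H.Adj v w)).imp id fun hH => ⟨hw, hH⟩,
      fun hw => hw.elim (fun hw => hHG hw) fun hw => hw.1⟩
  · have hm := hmate_mem.2 (rfl : mate v = mate v)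
    rintro (hv | hv)
    · exact G.irrefl (hv ▸ hm.1)
    · exact hm.2 hv

namespace TriangleDecomposition

variable {V : Type*} {G : SimpleGraph V} (D : TriangleDecomposition G)

theorem tri_finite (v : V) : (D.tri v).Finite :=
  Set.finite_of_ncard_ne_zero (by rw [D.ncard_tri]; norm_num)

theorem tri_eq_tri_iff {u v : V} : D.tri u = D.tri v ↔ u ∈ D.tri v :=
  ⟨fun h => h ▸ D.mem_tri_self u, D.tri_eq_of_mem⟩

theorem adj_mate (v : V) : G.Adj v (D.mate v) :=
  D.adj_iff.2 (Or.inr rfl)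

theorem adj_of_mem_tri {u v w : V} (hu : u ∈ D.tri v) (hw : w ∈ D.tri v) (huw : u ≠ w) :
    G.Adj u w :=
  D.adj_iff.2 (Or.inl ⟨D.tri_eq_of_mem hu ▸ hw, huw.symm⟩)

theorem tri_mate_ne (v : V) : D.tri (D.mate v) ≠ D.tri v := fun h =>
  D.mate_notMem_tri v (D.tri_eq_tri_iff.1 h)

theorem mate_mate (v : V) : D.mate (D.mate v) = v :=
  ((D.adj_iff.1 (D.adj_mate v).symm).resolve_left fun h =>
    D.tri_mate_ne v (D.tri_eq_of_mem h.1).symm).symm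

theorem adj_iff_of_tri_eq {u w : V} (h : D.tri u = D.tri w) : G.Adj u w ↔ u ≠ w := by
  have hw : w ∈ D.tri u := h ▸ D.mem_tri_self w
  rw [D.adj_iff, or_iff_left fun (hm : w = D.mate u) => D.mate_notMem_tri u (hm ▸ hw), ne_comm]
  exact and_iff_right hw

theorem adj_iff_of_tri_ne {u w : V} (h : D.tri u ≠ D.tri w) : G.Adj u w ↔ w = D.mate u := by
  rw [D.adj_iff, or_iff_right fun hw => h (D.tri_eq_of_mem hw.1).symm]

theorem mate_injective : Function.Injective D.mate :=
  Function.Involutive.injective D.mate_mate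

theorem exists_mem_tri_ne_ne (v x y : V) : ∃ z ∈ D.tri v, z ≠ x ∧ z ≠ y := by
  have h := Set.le_ncard_sdiff {x, y} (D.tri v)
  have hxy := Set.ncard_insert_le x {y}
  rw [D.ncard_tri] at h
  rw [Set.ncard_singleton] at hxy
  obtain ⟨z, hz, hzxy⟩ :=
    (Set.ncard_pos (s := D.tri v \ {x, y}) (D.tri_finite v).sdiff).1 (by omega)
  exact ⟨z, hz, fun h => hzxy (Or.inl h), fun h => hzxy (Or.inr h)⟩

theorem tri_eq_insert_pair {v x y : V} (hx : x ∈ D.tri v) (hy : y ∈ D.tri v) (hxv : x ≠ v)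
    (hyv : y ≠ v) (hxy : x ≠ y) : D.tri v = {v, x, y} := by
  refine (Set.eq_of_subset_of_ncard_le ?_ ?_ (D.tri_finite v)).symm
  · rintro u (rfl | rfl | rfl) <;> first | exact D.mem_tri_self u | assumption
  · have hv : v ∉ ({x, y} : Set V) := by rintro (h | h) <;> simp_all
    rw [D.ncard_tri, Set.ncard_insert_of_notMem hv, Set.ncard_pair hxy]

theorem mate_mem_of_tri_subset {T : Set V} (hT : ForcingClosed G T) {v : V} (h : D.tri v ⊆ T) :
    D.mate v ∈ T :=
  hT v (h (D.mem_tri_self v)) _ (D.adj_mate v) fun _ hu huT =>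
    (D.adj_iff.1 hu).resolve_left fun hu' => huT (h hu'.1)

theorem tri_subset_of_mem {T : Set V} (hT : ForcingClosed G T) {v x : V} (hv : v ∈ T)
    (hmate : D.mate v ∈ T) (hx : x ∈ D.tri v) (hxv : x ≠ v) (hxT : x ∈ T) : D.tri v ⊆ T := by
  intro y hy
  by_contra hyT
  have htri := D.tri_eq_insert_pair hx hy hxv (fun h => hyT (h ▸ hv)) fun h => hyT (h ▸ hxT)
  refine hyT (hT v hv y (D.adj_of_mem_tri (D.mem_tri_self v) hy fun h => hyT (h ▸ hv)) ?_)
  intro u hu huT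
  rcases D.adj_iff.1 hu with ⟨hu, huv⟩ | rfl
  · rw [htri] at hu
    rcases hu with rfl | rfl | rfl
    exacts [absurd rfl huv, absurd hxT huT, rfl]
  · exact absurd hmate huT

theorem disjoint_tri_tri_mate (a : V) : Disjoint (D.tri a) (D.tri (D.mate a)) :=
  Set.disjoint_left.2 fun _ h₁ h₂ =>
    D.tri_mate_ne a ((D.tri_eq_of_mem h₂).symm.trans (D.tri_eq_of_mem h₁))

theorem ncard_tri_union_tri_mate (a : V) : (D.tri a ∪ D.tri (D.mate a)).ncard = 6 := by
  rw [Set.ncard_union_eq (D.disjoint_tri_tri_mate a) (D.tri_finite a) (D.tri_finite _),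
    D.ncard_tri, D.ncard_tri]

theorem mate_mem_of_union_eq_univ {u w v : V} (h : D.tri u ∪ D.tri w = Set.univ)
    (hv : v ∈ D.tri u) : D.mate v ∈ D.tri w :=
  (h.symm ▸ Set.mem_univ (D.mate v) : D.mate v ∈ D.tri u ∪ D.tri w).resolve_left fun hm =>
    D.mate_notMem_tri v (by rwa [D.tri_eq_of_mem hv])

theorem isTotalForcingSet_tri {a : V} (h : D.tri a ∪ D.tri (D.mate a) = Set.univ) :
    IsTotalForcingSet G (D.tri a) := by
  refine ⟨fun T hT hcl v => ?_, fun v hv => ?_⟩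
  · rcases (h.symm ▸ Set.mem_univ v : v ∈ D.tri a ∪ D.tri (D.mate a)) with hv | hv
    · exact hT hv
    · have hmv := D.mate_mem_of_union_eq_univ (Set.union_comm _ _ ▸ h) hv
      have hsub : D.tri (D.mate v) ⊆ T := by rwa [D.tri_eq_of_mem hmv]
      simpa only [D.mate_mate] using D.mate_mem_of_tri_subset hcl hsub
  · obtain ⟨w, hw, hwv, -⟩ := D.exists_mem_tri_ne_ne a v v
    exact ⟨w, hw, D.adj_of_mem_tri hv hw hwv.symm⟩

theorem totalForcingNumber_eq_three [Finite V] {a : V} (h : D.tri a ∪ D.tri (D.mate a) = Set.univ)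
    (hG : IsCubic G) : totalForcingNumber G = 3 := by
  have hmem : 3 ∈ {n | ∃ S : Set V, IsTotalForcingSet G S ∧ S.ncard = n} :=
    ⟨_, D.isTotalForcingSet_tri h, D.ncard_tri a⟩
  have : Nonempty V := ⟨a⟩
  exact le_antisymm (Nat.sInf_le hmem) (le_csInf ⟨3, hmem⟩ fun n ⟨S, hS, hn⟩ =>
    hn ▸ hG.three_le_ncard_of_isForcingSet hS.1)

theorem nonempty_iso_prism {a : V} (h : D.tri a ∪ D.tri (D.mate a) = Set.univ) :
    Nonempty (G ≃g prism) := by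
  have : Finite (D.tri a) := (D.tri_finite a).to_subtype
  let e := Finite.equivFinOfCardEq (D.ncard_tri a)
  let f : Fin 3 → V := fun i => e.symm i
  have hf_inj : f.Injective := Subtype.val_injective.comp e.symm.injective
  have htri₀ : ∀ i, D.tri (f i) = D.tri a := fun i => D.tri_eq_of_mem (e.symm i).2
  have htri₁ : ∀ i, D.tri (D.mate (f i)) = D.tri (D.mate a) := fun i =>
    D.tri_eq_of_mem (D.mate_mem_of_union_eq_univ h (e.symm i).2)
  have h₀₁ : ∀ i k, D.tri (f i) ≠ D.tri (D.mate (f k)) := fun i k => by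
    rw [htri₀, htri₁]
    exact (D.tri_mate_ne a).symm
  let ψ : Fin 3 × Fin 2 → V := fun x => if x.2 = 0 then f x.1 else D.mate (f x.1)
  have hadj : ∀ x y, G.Adj (ψ x) (ψ y) ↔ prism.Adj x y := by
    rintro ⟨i, j⟩ ⟨k, l⟩
    rw [prism_adj_iff]
    fin_cases j <;> fin_cases l <;> simp [ψ]
    · rw [D.adj_iff_of_tri_eq ((htri₀ i).trans (htri₀ k).symm), hf_inj.ne_iff]
    · rw [D.adj_iff_of_tri_ne (h₀₁ i k), D.mate_injective.eq_iff, hf_inj.eq_iff, eq_comm]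
    · rw [D.adj_iff_of_tri_ne (h₀₁ k i).symm, D.mate_mate, hf_inj.eq_iff, eq_comm]
    · rw [D.adj_iff_of_tri_eq ((htri₁ i).trans (htri₁ k).symm), D.mate_injective.ne_iff,
        hf_inj.ne_iff]
  have hsurj : ψ.Surjective := by
    intro v
    rcases (h.symm ▸ Set.mem_univ v : v ∈ D.tri a ∪ D.tri (D.mate a)) with hv | hv
    · exact ⟨(e ⟨v, hv⟩, 0), by simp [ψ, f]⟩
    · have hmv := D.mate_mem_of_union_eq_univ (Set.union_comm _ _ ▸ h) hv
      exact ⟨(e ⟨_, hmv⟩, 1), by simp [ψ, f, D.mate_mate]⟩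
  have hcard : Nat.card (Fin 3 × Fin 2) ≤ Nat.card V := by
    rw [← Set.ncard_univ V, ← h, D.ncard_tri_union_tri_mate]
    simp
  exact ⟨(⟨Equiv.ofBijective ψ (hsurj.bijective_of_nat_card_le hcard), hadj _ _⟩ :
    prism ≃g G).symm⟩

def triangleGraph : SimpleGraph (Set.range D.tri) :=
  SimpleGraph.fromRel fun s t => ∃ v, D.tri v = s ∧ D.tri (D.mate v) = t

theorem triangleGraph_adj_rangeFactorization_mate (v : V) :
    D.triangleGraph.Adj (Set.rangeFactorization D.tri v)
      (Set.rangeFactorization D.tri (D.mate v)) :=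
  (SimpleGraph.fromRel_adj _ _ _).2
    ⟨fun h => D.tri_mate_ne v (congrArg Subtype.val h).symm, Or.inl ⟨v, rfl, rfl⟩⟩

theorem connected_triangleGraph (hG : G.Connected) : D.triangleGraph.Connected := by
  have : Nonempty V := hG.nonempty
  refine (SimpleGraph.connected_iff _).2 ⟨?_, inferInstance⟩
  rintro ⟨_, u, rfl⟩ ⟨_, w, rfl⟩
  refine hG.mem_of_adj_closed (K := {w | D.triangleGraph.Reachable
    (Set.rangeFactorization D.tri u) (Set.rangeFactorization D.tri w)}) ?_ .rfl w
  intro x y hxy hx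
  rcases D.adj_iff.1 hxy with ⟨hy, -⟩ | rfl
  · have : Set.rangeFactorization D.tri y = Set.rangeFactorization D.tri x :=
      Subtype.ext (D.tri_eq_of_mem hy)
    simpa only [Set.mem_ofPred_eq, this] using hx
  · exact hx.trans (D.triangleGraph_adj_rangeFactorization_mate x).reachable

structure Ranking (a : V) where
  rank : V → ℕ
  rank_eq_of_mem_tri {u v : V} : u ∈ D.tri v → rank u = rank v
  rank_mate_ne (v : V) : rank (D.mate v) ≠ rank v
  rank_eq_zero_iff {v : V} : rank v = 0 ↔ v ∈ D.tri a
  rank_mate_root : rank (D.mate a) = 1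
  exists_rank_mate_lt {v : V} : rank v ≠ 0 → ∃ w ∈ D.tri v, rank (D.mate w) < rank w

theorem nonempty_ranking [Finite V] (hG : G.Connected) (a : V) : Nonempty (D.Ranking a) := by
  let π := Set.rangeFactorization D.tri
  have hπ : ∀ {u v}, π u = π v ↔ u ∈ D.tri v := Subtype.ext_iff.trans D.tri_eq_tri_iff
  obtain ⟨r, hr, hr₀, hr₁, hdesc⟩ := (D.connected_triangleGraph hG).exists_injective_rank
    (D.triangleGraph_adj_rangeFactorization_mate a)
  refine ⟨⟨fun v => r (π v), fun hu => congrArg r (hπ.2 hu),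
    fun v => hr.ne fun h => D.mate_notMem_tri v (hπ.1 h), ?_, hr₁, fun {v} hv => ?_⟩⟩
  · exact fun {v} => by rw [← hr₀, hr.eq_iff, hπ]
  obtain ⟨t, hvt, hlt⟩ := hdesc (π v) fun h => hv (h ▸ hr₀)
  obtain ⟨-, ⟨w, hw, ht⟩ | ⟨w, ht, hw⟩⟩ := (SimpleGraph.fromRel_adj _ _ _).1 hvt
  · have hwv : π w = π v := Subtype.ext hw
    have hwt : π (D.mate w) = t := Subtype.ext ht
    exact ⟨w, hπ.1 hwv, by rwa [hwv, hwt]⟩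
  · have hwv : π (D.mate w) = π v := Subtype.ext hw
    have hwt : π w = t := Subtype.ext ht
    exact ⟨D.mate w, hπ.1 hwv, by rwa [D.mate_mate, hwv, hwt]⟩

namespace Ranking

variable {D} {a : V} (R : D.Ranking a)

def backward : Set V := {v | R.rank (D.mate v) < R.rank v}

theorem mate_mem_backward_iff {v : V} : D.mate v ∈ R.backward ↔ v ∉ R.backward := by
  have := R.rank_mate_ne v
  simp only [backward, Set.mem_ofPred_eq, D.mate_mate]
  omega

theorem two_mul_ncard_compl_backward [Finite V] : 2 * R.backwardᶜ.ncard = Nat.card V := by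
  have himage : D.mate '' R.backwardᶜ = R.backward := by
    ext v
    refine ⟨fun ⟨u, hu, huv⟩ => huv ▸ R.mate_mem_backward_iff.2 hu,
      fun hv => ⟨D.mate v, fun h => R.mate_mem_backward_iff.1 h hv, D.mate_mate v⟩⟩
  have h := Set.ncard_image_of_injective R.backwardᶜ D.mate_injective
  rw [himage] at h
  have := Set.ncard_add_ncard_compl R.backward
  omega

theorem notMem_backward_of_mem_tri {v : V} (hv : v ∈ D.tri a) : v ∉ R.backward := by
  simp [backward, R.rank_eq_zero_iff.2 hv]

theorem mate_mem_backward : D.mate a ∈ R.backward := by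
  simp [backward, D.mate_mate, R.rank_mate_root, R.rank_eq_zero_iff.2 (D.mem_tri_self a)]

def seeds : Set V := {v | v ∉ D.tri a ∧ v ∉ R.backward ∧ (D.tri v ∩ R.backward).ncard = 1}

theorem mem_seeds_of_mem_tri {v y : V} (hv : v ∈ R.seeds) (hy : y ∈ D.tri v)
    (hyB : y ∉ R.backward) : y ∈ R.seeds := by
  have htri := D.tri_eq_of_mem hy
  refine ⟨fun hya => hv.1 ?_, hyB, by rw [htri]; exact hv.2.2⟩
  rw [← D.tri_eq_tri_iff, ← htri, D.tri_eq_of_mem hya]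

theorem eq_of_mem_backward_of_mem_seeds {v x y : V} (hv : v ∈ R.seeds) (hx : x ∈ D.tri v)
    (hxB : x ∈ R.backward) (hy : y ∈ D.tri v) (hyB : y ∈ R.backward) : x = y :=
  Set.ncard_le_one_iff ((D.tri_finite v).inter_of_left _) |>.1 hv.2.2.le ⟨hx, hxB⟩ ⟨hy, hyB⟩

theorem exists_mem_tri_mem_seeds {v : V} (hv : v ∈ R.seeds) :
    ∃ w ∈ D.tri v, w ≠ v ∧ w ∈ R.seeds := by
  obtain ⟨x, hx, hxB⟩ := (Set.ncard_pos ((D.tri_finite v).inter_of_left _)).1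
    (hv.2.2.symm ▸ Nat.one_pos : 0 < (D.tri v ∩ R.backward).ncard)
  obtain ⟨w, hw, hwv, hwx⟩ := D.exists_mem_tri_ne_ne v v x
  exact ⟨w, hw, hwv, R.mem_seeds_of_mem_tri hv hw fun hwB =>
    hwx (R.eq_of_mem_backward_of_mem_seeds hv hw hwB hx hxB)⟩

/-- Coloring the first triangle and the seeds colors everything, triangle by triangle: the
backward vertices are forced along their matching edges, and a third vertex that is not a seed
is forced inside its triangle. -/
theorem mem_of_forcingClosed {T : Set V} (hT : ForcingClosed G T) (hroot : D.tri a ⊆ T)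
    (hseeds : R.seeds ⊆ T) (v : V) : v ∈ T := by
  induction hn : R.rank v using Nat.strong_induction_on generalizing v with
  | _ n ih =>
  have hlt : ∀ u, R.rank u < R.rank v → u ∈ T := fun u hu => ih _ (hn ▸ hu) u rfl
  have hback : ∀ u ∈ D.tri v, u ∈ R.backward → u ∈ T := fun u hu huB => by
    have hsub : D.tri (D.mate u) ⊆ T := fun w hw => hlt w (by
      rw [R.rank_eq_of_mem_tri hw, ← R.rank_eq_of_mem_tri hu]
      exact huB)
    simpa only [D.mate_mate] using D.mate_mem_of_tri_subset hT hsub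
  by_cases hv0 : R.rank v = 0
  · exact hroot (R.rank_eq_zero_iff.1 hv0)
  by_cases hvB : v ∈ R.backward
  · exact hback v (D.mem_tri_self v) hvB
  by_cases hone : (D.tri v ∩ R.backward).ncard = 1
  · exact hseeds ⟨fun h => hv0 (R.rank_eq_zero_iff.2 h), hvB, hone⟩
  obtain ⟨w, hw, hwB⟩ := R.exists_rank_mate_lt hv0
  have hpos : 0 < (D.tri v ∩ R.backward).ncard :=
    (Set.ncard_pos ((D.tri_finite v).inter_of_left _)).2 ⟨w, hw, hwB⟩
  obtain ⟨x, ⟨hx, hxB⟩, hxw⟩ := Set.exists_ne_of_one_lt_ncard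
    (s := D.tri v ∩ R.backward) (by omega) w
  have hmate : D.mate w ∈ T := hlt _ (by rwa [← R.rank_eq_of_mem_tri hw])
  have htri := D.tri_eq_of_mem hw
  refine (htri ▸ D.tri_subset_of_mem hT (hback w hw hwB) hmate (htri ▸ hx) hxw
    (hback x hx hxB)) (D.mem_tri_self v)

theorem exists_mem_tri_mate_notMem_backward (hG : G.Connected)
    (hne : D.tri a ∪ D.tri (D.mate a) ≠ Set.univ) :
    ∃ z ∈ D.tri (D.mate a), z ∉ R.backward := by
  by_contra! hB
  have hmate : ∀ z ∈ D.tri (D.mate a), D.mate z ∈ D.tri a := fun z hz =>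
    R.rank_eq_zero_iff.1 (by
      have := hB z hz
      rw [backward, Set.mem_ofPred_eq, R.rank_eq_of_mem_tri hz, R.rank_mate_root] at this
      omega)
  have himage : D.mate '' D.tri (D.mate a) = D.tri a :=
    Set.eq_of_subset_of_ncard_le (Set.image_subset_iff.2 hmate)
      (by rw [Set.ncard_image_of_injective _ D.mate_injective, D.ncard_tri, D.ncard_tri])
      (D.tri_finite a)
  -- otherwise the two triangles would form a connected component
  refine hne (Set.eq_univ_of_forall (hG.mem_of_adj_closed ?_ (Or.inl (D.mem_tri_self a))))
  intro u w huw hu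
  rcases D.adj_iff.1 huw with ⟨hw, -⟩ | rfl
  · exact hu.imp (fun hu => D.tri_eq_of_mem hu ▸ hw) fun hu => D.tri_eq_of_mem hu ▸ hw
  · rcases hu with hu | hu
    · obtain ⟨z, hz, rfl⟩ := himage.symm ▸ hu
      exact Or.inr (by rwa [D.mate_mate])
    · exact Or.inl (hmate u hu)

def totalForcingSet (b z : V) : Set V := {a, b, D.mate a} ∪ (R.seeds \ {z})

theorem isForcingSet_totalForcingSet {b z : V} (hb : b ∈ D.tri a) (hba : b ≠ a)
    (hz : z ∈ D.tri (D.mate a)) : IsForcingSet G (R.totalForcingSet b z) := by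
  intro T hT hcl
  have haT : a ∈ T := hT (.inl (.inl rfl))
  have hmaT : D.mate a ∈ T := hT (.inl (.inr (.inr rfl)))
  refine R.mem_of_forcingClosed hcl (D.tri_subset_of_mem hcl haT hmaT hb hba
    (hT (.inl (.inr (.inl rfl))))) fun v hv => ?_
  by_cases hvz : v = z
  swap
  · exact hT (.inr ⟨hv, hvz⟩)
  subst hvz
  -- `mate a` is the only backward vertex of the triangle of the seed `v`, so the third vertex
  -- `y` is a seed too, and `mate a` forces `v`
  have hma : D.mate a ∈ D.tri v := D.tri_eq_of_mem hz ▸ D.mem_tri_self _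
  obtain ⟨y, hy, hya, hyv⟩ := D.exists_mem_tri_ne_ne v (D.mate a) v
  have hyS : y ∈ R.seeds := R.mem_seeds_of_mem_tri hv hy fun hyB =>
    hya (R.eq_of_mem_backward_of_mem_seeds hv hy hyB hma R.mate_mem_backward)
  exact D.tri_subset_of_mem hcl hmaT (by rwa [D.mate_mate]) (D.tri_eq_of_mem hz ▸ hy) hya
    (hT (.inr ⟨hyS, hyv⟩)) hz

theorem exists_adj_of_mem_totalForcingSet {b z : V} (hb : b ∈ D.tri a) (hba : b ≠ a)
    (hz : z ∈ D.tri (D.mate a)) :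
    ∀ v ∈ R.totalForcingSet b z, ∃ w ∈ R.totalForcingSet b z, G.Adj v w := by
  rintro v ((rfl | rfl | rfl) | ⟨hv, hvz⟩)
  · exact ⟨b, .inl (.inr (.inl rfl)), D.adj_of_mem_tri (D.mem_tri_self _) hb hba.symm⟩
  · exact ⟨a, .inl (.inl rfl), D.adj_of_mem_tri hb (D.mem_tri_self a) hba⟩
  · exact ⟨a, .inl (.inl rfl), (D.adj_mate a).symm⟩
  obtain ⟨w, hw, hwv, hwS⟩ := R.exists_mem_tri_mem_seeds hv
  by_cases hwz : w = z
  · subst hwz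
    -- the partner of `v` in its triangle was dropped, so pair `v` with `mate a` instead
    have hv' : v ∈ D.tri (D.mate a) := by
      rw [← D.tri_eq_tri_iff, ← D.tri_eq_of_mem hz, D.tri_eq_of_mem hw]
    exact ⟨D.mate a, .inl (.inr (.inr rfl)), D.adj_of_mem_tri hv' (D.mem_tri_self _)
      fun h => hv.2.1 (h ▸ R.mate_mem_backward)⟩
  · exact ⟨w, .inr ⟨hwS, hwz⟩, D.adj_of_mem_tri (D.mem_tri_self v) hw hwv.symm⟩

theorem two_mul_ncard_totalForcingSet_add_two_le [Finite V] (b : V) {z : V}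
    (hz : z ∈ D.tri (D.mate a)) (hzB : z ∉ R.backward) :
    2 * (R.totalForcingSet b z).ncard + 2 ≤ Nat.card V := by
  have hza : z ∉ D.tri a := Set.disjoint_right.1 (D.disjoint_tri_tri_mate a) hz
  have hseeds : R.seeds \ {z} ⊆ (R.backwardᶜ \ D.tri a) \ {z} :=
    fun v ⟨hv, hvz⟩ => ⟨⟨hv.2.1, hv.1⟩, hvz⟩
  have h₁ := Set.ncard_le_ncard hseeds
  have h₂ := Set.ncard_sdiff_singleton_add_one (s := R.backwardᶜ \ D.tri a) ⟨hzB, hza⟩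
  have h₃ := Set.ncard_sdiff_add_ncard_of_subset (t := R.backwardᶜ)
    fun v hv => R.notMem_backward_of_mem_tri hv
  have h₄ := Set.ncard_union_le {a, b, D.mate a} (R.seeds \ {z})
  have h₅ := Set.ncard_insert_le a {b, D.mate a}
  have h₆ := Set.ncard_insert_le b {D.mate a}
  have h₇ := R.two_mul_ncard_compl_backward
  rw [D.ncard_tri] at h₃
  rw [Set.ncard_singleton] at h₆
  rw [totalForcingSet]
  omega

end Ranking

theorem two_mul_totalForcingNumber_add_two_le [Finite V] (hG : G.Connected) {a : V}
    (hne : D.tri a ∪ D.tri (D.mate a) ≠ Set.univ) :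
    2 * totalForcingNumber G + 2 ≤ Nat.card V := by
  obtain ⟨R⟩ := D.nonempty_ranking hG a
  obtain ⟨z, hz, hzB⟩ := R.exists_mem_tri_mate_notMem_backward hG hne
  obtain ⟨b, hb, hba, -⟩ := D.exists_mem_tri_ne_ne a a a
  have : totalForcingNumber G ≤ (R.totalForcingSet b z).ncard :=
    Nat.sInf_le ⟨_, ⟨R.isForcingSet_totalForcingSet hb hba hz,
      R.exists_adj_of_mem_totalForcingSet hb hba hz⟩, rfl⟩
  have := R.two_mul_ncard_totalForcingSet_add_two_le b hz hzB
  omega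

end TriangleDecomposition

/-- If `G` is a connected cubic graph of order `n` having a spanning 2-factor consisting
of triangles, then `F_t(G) = n/2` if and only if `G` is isomorphic to the prism
`C₃ □ K₂`. -/
theorem totalForcingNumber_eq_half_iff_prism {V : Type*} [Fintype V]
    (G : SimpleGraph V) (hconn : G.Connected) (hcubic : IsCubic G)
    (h2f : HasTriangleTwoFactor G) :
    2 * totalForcingNumber G = Fintype.card V ↔ Nonempty (G ≃g prism) := by
  obtain ⟨D⟩ := hcubic.nonempty_triangleDecomposition h2f
  obtain ⟨a⟩ := hconn.nonempty
  have hsix := D.ncard_tri_union_tri_mate a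
  rw [← Nat.card_eq_fintype_card]
  by_cases htwo : D.tri a ∪ D.tri (D.mate a) = Set.univ
  · rw [D.totalForcingNumber_eq_three htwo hcubic, ← Set.ncard_univ, ← htwo, hsix]
    exact iff_of_true rfl (D.nonempty_iso_prism htwo)
  · have hlt : 6 < Nat.card V := hsix ▸ Set.ncard_lt_card htwo
    refine iff_of_false ?_ fun ⟨e⟩ => ?_
    · have := D.two_mul_totalForcingNumber_add_two_le hconn htwo
      omega
    · rw [Nat.card_congr e.toEquiv] at hlt
      simp at hlt
end

section
/- For every real number ε > 0, there exists a connected, claw-free, cubic graph G with F_t(G)/F(G) > 2 − ε; in particular, the bound F_t(G)/F(G) ≤ 2 for connected claw-free cubic graphs is asymptotically best possible. -/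
/-- `G` is claw-free: it has no induced `K_{1,3}`. -/
def ClawFree {V : Type*} (G : SimpleGraph V) : Prop :=
  ¬ ∃ v a b c : V, G.Adj v a ∧ G.Adj v b ∧ G.Adj v c ∧
    a ≠ b ∧ a ≠ c ∧ b ≠ c ∧ ¬ G.Adj a b ∧ ¬ G.Adj a c ∧ ¬ G.Adj b c

open Fin.NatCast in
theorem Fin.induction_add_one {k : ℕ} [NeZero k] {p : Fin k → Prop} (zero : p 0)
    (succ : ∀ i, p i → p (i + 1)) (i : Fin k) : p i := by
  have h : ∀ m : ℕ, p (m : Fin k) := fun m ↦ Nat.rec (by simpa using zero)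
    (fun m ih ↦ by simpa using succ _ ih) m
  simpa using h i

theorem Set.mul_card_le_ncard_of_le_ncard_fiber {α β : Type*} [Finite α] [Fintype β]
    (f : α → β) (S : Set α) (n : ℕ) (h : ∀ b, n ≤ (S ∩ f ⁻¹' {b}).ncard) :
    n * Fintype.card β ≤ S.ncard := by
  classical
  have := Fintype.ofFinite α
  rw [Set.ncard_eq_toFinset_card']
  refine Finset.mul_card_image_le_card_of_maps_to (f := f) (t := Finset.univ)
    (fun _ _ ↦ Finset.mem_univ _) n fun b _ ↦ ?_
  convert h b using 1
  rw [Set.ncard_eq_toFinset_card']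
  congr 1
  ext
  simp

open SimpleGraph

variable {V : Type*} {G : SimpleGraph V}

theorem IsCubic.exists_adj (hG : IsCubic G) (v : V) : ∃ w, G.Adj v w :=
  Set.nonempty_of_ncard_ne_zero (s := G.neighborSet v) (by rw [hG]; decide)

theorem ClawFree.of_isCubic (hG : IsCubic G)
    (h : ∀ v, ∃ x y, G.Adj v x ∧ G.Adj v y ∧ G.Adj x y) : ClawFree G := by
  rintro ⟨v, a, b, c, ha, hb, hc, hab, hac, hbc, nab, nac, nbc⟩
  obtain ⟨x, y, hx, hy, hxy⟩ := h v
  have hN : G.neighborSet v = {a, b, c} :=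
    (Set.eq_of_subset_of_ncard_le (by simp [Set.insert_subset_iff, ha, hb, hc])
      (by rw [hG, Set.ncard_eq_three.2 ⟨a, b, c, hab, hac, hbc, rfl⟩])
      (Set.finite_of_ncard_ne_zero (by rw [hG]; decide))).symm
  rw [← mem_neighborSet, hN] at hx hy
  simp only [Set.mem_insert_iff, Set.mem_singleton_iff] at hx hy
  rcases hx with rfl | rfl | rfl <;> rcases hy with rfl | rfl | rfl <;>
    simp_all [G.adj_comm]

theorem ForcingClosed.mem_of_neighborSet_subset_insert {T : Set V} {v w : V}
    (hT : ForcingClosed G T) (hv : v ∈ T) (hw : w ∈ G.neighborSet v)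
    (hN : G.neighborSet v ⊆ insert w T) : w ∈ T :=
  hT v hv w hw fun _ hu huT ↦ (hN hu).resolve_right huT

theorem isForcingSet_univ : IsForcingSet G Set.univ :=
  fun _ hT _ v ↦ hT (Set.mem_univ v)

theorem IsForcingSet.nonempty [Nonempty V] {S : Set V} (hS : IsForcingSet G S) : S.Nonempty := by
  rw [Set.nonempty_iff_ne_empty]
  rintro rfl
  exact hS ∅ le_rfl (fun _ hv ↦ hv.elim) (Classical.arbitrary V)

theorem IsForcingSet.mem_or_mem_of_twins {S : Set V} (hS : IsForcingSet G S) {x y : V}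
    (hxy : x ≠ y) (htwin : ∀ v, v ≠ x → v ≠ y → (G.Adj v x ↔ G.Adj v y)) :
    x ∈ S ∨ y ∈ S := by
  by_contra! h
  -- a vertex outside `{x, y}` adjacent to one of them sees both uncolored, so forces nothing
  have hT : ForcingClosed G {x, y}ᶜ := by
    intro v hv w hvw hforce
    simp only [Set.mem_compl_iff, Set.mem_insert_iff, Set.mem_singleton_iff, not_or] at hv ⊢
    refine ⟨fun hwx ↦ hxy ?_, fun hwy ↦ hxy ?_⟩
    · exact ((hforce y ((htwin v hv.1 hv.2).1 (hwx ▸ hvw)) (by simp)).trans hwx).symm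
    · exact (hforce x ((htwin v hv.1 hv.2).2 (hwy ▸ hvw)) (by simp)).trans hwy
  exact hS _ (fun v hv ↦ by rintro (rfl | rfl) <;> simp_all) hT x (by simp)

theorem forcingNumber_le {S : Set V} (hS : IsForcingSet G S) : forcingNumber G ≤ S.ncard :=
  Nat.sInf_le ⟨S, hS, rfl⟩

theorem forcingNumber_pos [Finite V] [Nonempty V] : 0 < forcingNumber G := by
  obtain ⟨S, hS, hcard⟩ :=
    Nat.sInf_mem (s := {n | ∃ S : Set V, IsForcingSet G S ∧ S.ncard = n})
      ⟨_, Set.univ, isForcingSet_univ, rfl⟩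
  rw [forcingNumber, ← hcard]
  exact hS.nonempty.ncard_pos

theorem isTotalForcingSet_univ (h : ∀ v, ∃ w, G.Adj v w) : IsTotalForcingSet G Set.univ :=
  ⟨isForcingSet_univ, fun v _ ↦ (h v).imp fun _ hw ↦ ⟨Set.mem_univ _, hw⟩⟩

theorem le_totalForcingNumber (h : ∀ v, ∃ w, G.Adj v w) {n : ℕ}
    (hn : ∀ S, IsTotalForcingSet G S → n ≤ S.ncard) : n ≤ totalForcingNumber G :=
  le_csInf ⟨_, Set.univ, isTotalForcingSet_univ h, rfl⟩
    fun _ ⟨S, hS, hcard⟩ ↦ hcard ▸ hn S hS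

/-- Diamond `i` has ends `(i, 0)`, `(i, 1)` and middle vertices `(i, 2)`, `(i, 3)`; its end
`(i, 1)` is joined to the end `(i + 1, 0)` of the next diamond. -/
def diamondNecklace (k : ℕ) [NeZero k] : SimpleGraph (Fin k × Fin 4) :=
  fromRel fun v w ↦
    (v.1 = w.1 ∧ 2 ≤ v.2 ∧ v.2 ≠ w.2) ∨ (w.1 = v.1 + 1 ∧ v.2 = 1 ∧ w.2 = 0)

namespace diamondNecklace

variable {k : ℕ} [NeZero k]

@[simp]
theorem neighborSet_zero (i : Fin k) :
    (diamondNecklace k).neighborSet (i, 0) = {(i, 2), (i, 3), (i - 1, 1)} := by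
  ext ⟨i', j⟩
  fin_cases j <;> simp [diamondNecklace, eq_sub_iff_add_eq, eq_comm]

@[simp]
theorem neighborSet_one (i : Fin k) :
    (diamondNecklace k).neighborSet (i, 1) = {(i, 2), (i, 3), (i + 1, 0)} := by
  ext ⟨i', j⟩
  fin_cases j <;> simp [diamondNecklace, eq_comm]

@[simp]
theorem neighborSet_two (i : Fin k) :
    (diamondNecklace k).neighborSet (i, 2) = {(i, 0), (i, 1), (i, 3)} := by
  ext ⟨i', j⟩
  fin_cases j <;> simp [diamondNecklace, eq_comm]

@[simp]
theorem neighborSet_three (i : Fin k) :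
    (diamondNecklace k).neighborSet (i, 3) = {(i, 0), (i, 1), (i, 2)} := by
  ext ⟨i', j⟩
  fin_cases j <;> simp [diamondNecklace, eq_comm]

theorem isCubic : IsCubic (diamondNecklace k) := by
  rintro ⟨i, j⟩
  fin_cases j <;> simp

theorem clawFree : ClawFree (diamondNecklace k) := by
  refine .of_isCubic isCubic fun ⟨i, j⟩ ↦ ?_
  simp only [← mem_neighborSet]
  fin_cases j
  · exact ⟨(i, 2), (i, 3), by simp⟩
  · exact ⟨(i, 2), (i, 3), by simp⟩
  · exact ⟨(i, 0), (i, 3), by simp⟩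
  · exact ⟨(i, 0), (i, 2), by simp⟩

theorem connected : (diamondNecklace k).Connected := by
  have hmid : ∀ i : Fin k, (diamondNecklace k).Reachable (0, 2) (i, 2) := by
    refine Fin.induction_add_one .rfl fun i hi ↦ hi.trans ?_
    have h21 : (diamondNecklace k).Adj (i, 2) (i, 1) := by simp [← mem_neighborSet]
    have h10 : (diamondNecklace k).Adj (i, 1) (i + 1, 0) := by simp [← mem_neighborSet]
    have h02 : (diamondNecklace k).Adj (i + 1, 0) (i + 1, 2) := by simp [← mem_neighborSet]
    exact h21.reachable.trans (h10.reachable.trans h02.reachable)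
  refine connected_iff_exists_forall_reachable _ |>.2 ⟨(0, 2), fun ⟨i, j⟩ ↦ ?_⟩
  refine (hmid i).trans ?_
  fin_cases j
  · exact Adj.reachable (by simp [← mem_neighborSet])
  · exact Adj.reachable (by simp [← mem_neighborSet])
  · rfl
  · exact Adj.reachable (by simp [← mem_neighborSet])

def seed (k : ℕ) [NeZero k] : Set (Fin k × Fin 4) :=
  insert (0, 0) (insert (0, 3) (Set.range fun i ↦ (i, 2)))

theorem ncard_seed_le : (seed k).ncard ≤ k + 2 :=
  calc (seed k).ncard ≤ (Set.range fun i : Fin k ↦ (i, (2 : Fin 4))).ncard + 1 + 1 :=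
        (Set.ncard_insert_le _ _).trans (Nat.add_le_add_right (Set.ncard_insert_le _ _) 1)
    _ = k + 2 := by simp [Set.ncard_range_of_injective (Prod.mk_left_injective _)]

theorem isForcingSet_seed : IsForcingSet (diamondNecklace k) (seed k) := by
  intro T hseed hT
  have hmid : ∀ i, (i, 2) ∈ T := fun i ↦ hseed (by simp [seed])
  have hends : ∀ i, (i, 0) ∈ T ∧ (i, 3) ∈ T := by
    refine Fin.induction_add_one ⟨hseed (by simp [seed]), hseed (by simp [seed])⟩ ?_
    rintro i ⟨h0, h3⟩
    have h1 : (i, 1) ∈ T :=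
      hT.mem_of_neighborSet_subset_insert (hmid i) (by simp)
        (by simp [Set.insert_subset_iff, h0, h3])
    have h0' : (i + 1, 0) ∈ T :=
      hT.mem_of_neighborSet_subset_insert h1 (by simp)
        (by simp [Set.insert_subset_iff, hmid, h3])
    exact ⟨h0', hT.mem_of_neighborSet_subset_insert h0' (by simp)
      (by simp [Set.insert_subset_iff, hmid, h1])⟩
  rintro ⟨i, j⟩
  fin_cases j
  · exact (hends i).1
  · exact hT.mem_of_neighborSet_subset_insert (hmid i) (by simp)
      (by simp [Set.insert_subset_iff, hends i])
  · exact hmid i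
  · exact (hends i).2

theorem two_le_ncard_inter_diamond {S : Set (Fin k × Fin 4)}
    (hS : IsTotalForcingSet (diamondNecklace k) S) (i : Fin k) :
    2 ≤ (S ∩ Prod.fst ⁻¹' {i}).ncard := by
  have hmid : ∀ u ∈ S, u = (i, 2) ∨ u = (i, 3) →
      2 ≤ (S ∩ Prod.fst ⁻¹' {i}).ncard := by
    intro u hu hui
    obtain ⟨w, hw, huw⟩ := hS.2 u hu
    have hwi : w.1 = i := by
      rw [← mem_neighborSet] at huw
      rcases hui with rfl | rfl <;>
        simp only [neighborSet_two, neighborSet_three, Set.mem_insert_iff,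
          Set.mem_singleton_iff] at huw <;>
        rcases huw with rfl | rfl | rfl <;> rfl
    refine (Set.one_lt_ncard_iff).2 ⟨u, w, ⟨hu, ?_⟩, ⟨hw, hwi⟩, huw.ne⟩
    rcases hui with rfl | rfl <;> rfl
  have htwin : ∀ v, v ≠ (i, 2) → v ≠ (i, 3) →
      ((diamondNecklace k).Adj v (i, 2) ↔ (diamondNecklace k).Adj v (i, 3)) := by
    intro v h2 h3
    rw [adj_comm, (diamondNecklace k).adj_comm v, ← mem_neighborSet,
      ← mem_neighborSet]
    simp [h2, h3]
  rcases hS.1.mem_or_mem_of_twins (by simp) htwin with h | h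
  · exact hmid _ h (.inl rfl)
  · exact hmid _ h (.inr rfl)

theorem two_mul_le_totalForcingNumber : 2 * k ≤ totalForcingNumber (diamondNecklace k) := by
  refine le_totalForcingNumber isCubic.exists_adj fun S hS ↦ ?_
  simpa using Set.mul_card_le_ncard_of_le_ncard_fiber Prod.fst S 2 (two_le_ncard_inter_diamond hS)

end diamondNecklace

/-- For every `ε > 0` there is a connected, claw-free, cubic graph `G` with
`F_t(G)/F(G) > 2 - ε`: the bound `F_t(G)/F(G) ≤ 2` is asymptotically best possible. -/
theorem ratio_totalForcing_forcing_asymptotically_two :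
    ∀ ε : ℝ, 0 < ε → ∃ (V : Type) (_ : Fintype V) (G : SimpleGraph V),
      G.Connected ∧ ClawFree G ∧ IsCubic G ∧
      (2 : ℝ) - ε < (totalForcingNumber G : ℝ) / (forcingNumber G : ℝ) := by
  intro ε hε
  obtain ⟨k, hk⟩ := exists_nat_gt (4 / ε)
  have hk0 : (0 : ℝ) < k := (div_pos four_pos hε).trans hk
  have : NeZero k := ⟨by exact_mod_cast hk0.ne'⟩
  refine ⟨_, inferInstance, diamondNecklace k, diamondNecklace.connected,
    diamondNecklace.clawFree, diamondNecklace.isCubic, ?_⟩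
  have hF : forcingNumber (diamondNecklace k) ≤ k + 2 :=
    (forcingNumber_le diamondNecklace.isForcingSet_seed).trans diamondNecklace.ncard_seed_le
  have hFt := diamondNecklace.two_mul_le_totalForcingNumber (k := k)
  have hFpos : 0 < forcingNumber (diamondNecklace k) := forcingNumber_pos
  -- `2k / (k + 2) = 2 - 4 / (k + 2)`
  calc 2 - ε < 2 * k / (k + 2) := by
        rw [lt_div_iff₀ (by positivity)]
        rw [div_lt_iff₀ hε] at hk
        nlinarith
    _ ≤ _ := div_le_div₀ (by positivity) (by exact_mod_cast hFt) (by exact_mod_cast hFpos)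
        (by exact_mod_cast hF)
end

section
/- If G is a connected, claw-free, cubic graph that is not isomorphic to K_4, then the vertex set V(G) can be partitioned into sets each of which induces a triangle or a diamond in G, and this partition is unique. -/
/-- The set `S` induces a triangle in `G`. -/
def InducesTriangle {V : Type*} (G : SimpleGraph V) (S : Set V) : Prop :=
  ∃ a b c : V, S = {a, b, c} ∧ a ≠ b ∧ a ≠ c ∧ b ≠ c ∧
    G.Adj a b ∧ G.Adj a c ∧ G.Adj b c

/-- The set `S` induces a diamond (`K₄` minus the edge `ab`) in `G`. -/
def InducesDiamond {V : Type*} (G : SimpleGraph V) (S : Set V) : Prop :=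
  ∃ a b c d : V, S = {a, b, c, d} ∧ a ≠ b ∧ a ≠ c ∧ a ≠ d ∧ b ≠ c ∧ b ≠ d ∧ c ≠ d ∧
    ¬ G.Adj a b ∧ G.Adj a c ∧ G.Adj a d ∧ G.Adj b c ∧ G.Adj b d ∧ G.Adj c d

/-!
Call two vertices triangle-adjacent if they lie in a common triangle. In a cubic graph a vertex
of a triangle or diamond `S` has at most one neighbour outside `S`, so no triangle of `G` meets
two parts of a triangle/diamond partition; since triangles and diamonds are connected under
triangle-adjacency, the parts must be exactly the components of the triangle graph. These
components are triangles or diamonds: by claw-freeness every vertex lies in a triangle; if some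
other vertex sees two of its vertices, the two triangles form a diamond (not `K₄`, as `G` is
connected and not `K₄`) whose two middle vertices have all their neighbours inside it, and
otherwise the triangle itself is closed under triangle-adjacency.
-/

open SimpleGraph

section

variable {V : Type*} {G : SimpleGraph V}

theorem IsCubic.neighborSet_eq (hG : IsCubic G) {v a b c : V} (ha : G.Adj v a)
    (hb : G.Adj v b) (hc : G.Adj v c) (hab : a ≠ b) (hac : a ≠ c) (hbc : b ≠ c) :
    G.neighborSet v = {a, b, c} := by
  refine (Set.eq_of_subset_of_ncard_le ?_ ?_ (Set.finite_of_ncard_pos ?_)).symm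
  · simp [Set.insert_subset_iff, ha, hb, hc]
  · rw [hG v, Set.ncard_eq_three.2 ⟨a, b, c, hab, hac, hbc, rfl⟩]
  · rw [hG v]; norm_num

theorem IsCubic.eq_or_eq_or_eq_of_adj (hG : IsCubic G) {v a b c w : V} (ha : G.Adj v a)
    (hb : G.Adj v b) (hc : G.Adj v c) (hab : a ≠ b) (hac : a ≠ c) (hbc : b ≠ c)
    (hw : G.Adj v w) : w = a ∨ w = b ∨ w = c := by
  simpa [hG.neighborSet_eq ha hb hc hab hac hbc] using (G.mem_neighborSet v w).2 hw

theorem ClawFree.exists_adj_adj_adj (hcf : ClawFree G) (hG : IsCubic G) (v : V) :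
    ∃ a b, G.Adj v a ∧ G.Adj v b ∧ G.Adj a b := by
  obtain ⟨a, b, c, hab, hac, hbc, hN⟩ := Set.ncard_eq_three.1 (hG v)
  have hadj : ∀ x ∈ ({a, b, c} : Set V), G.Adj v x := fun x hx => by rwa [← hN] at hx
  obtain ⟨ha, hb, hc⟩ : G.Adj v a ∧ G.Adj v b ∧ G.Adj v c :=
    ⟨hadj a (by simp), hadj b (by simp), hadj c (by simp)⟩
  by_contra! h
  exact hcf ⟨v, a, b, c, ha, hb, hc, hab, hac, hbc, h a b ha hb, h a c ha hc, h b c hb hc⟩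

theorem SimpleGraph.Reachable.mem_of_forall_adj {H : SimpleGraph V} {S : Set V}
    (hS : ∀ ⦃x y⦄, x ∈ S → H.Adj x y → y ∈ S) {x y : V} (h : H.Reachable x y) (hx : x ∈ S) :
    y ∈ S := by
  rw [reachable_iff_reflTransGen] at h
  induction h with
  | refl => exact hx
  | tail _ hadj ih => exact hS ih hadj

theorem IsCubic.nonempty_iso_top (hconn : G.Connected) (hG : IsCubic G) {a b c d : V}
    (hab : G.Adj a b) (hac : G.Adj a c) (had : G.Adj a d) (hbc : G.Adj b c) (hbd : G.Adj b d)
    (hcd : G.Adj c d) : Nonempty (G ≃g (⊤ : SimpleGraph (Fin 4))) := by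
  have hK : ∀ ⦃x y⦄, x ∈ ({a, b, c, d} : Set V) → G.Adj x y → y ∈ ({a, b, c, d} : Set V) := by
    rintro x y (rfl | rfl | rfl | rfl) hxy
    · rcases hG.eq_or_eq_or_eq_of_adj hab hac had hbc.ne hbd.ne hcd.ne hxy with rfl | rfl | rfl <;>
        simp
    · rcases hG.eq_or_eq_or_eq_of_adj hab.symm hbc hbd hac.ne had.ne hcd.ne hxy with
        rfl | rfl | rfl <;> simp
    · rcases hG.eq_or_eq_or_eq_of_adj hac.symm hbc.symm hcd hab.ne had.ne hbd.ne hxy with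
        rfl | rfl | rfl <;> simp
    · rcases hG.eq_or_eq_or_eq_of_adj had.symm hbd.symm hcd.symm hab.ne hac.ne hbc.ne hxy with
        rfl | rfl | rfl <;> simp
  let f : Fin 4 → V := ![a, b, c, d]
  have hf : ∀ i j, G.Adj (f i) (f j) ↔ i ≠ j := by
    intro i j
    fin_cases i <;> fin_cases j <;>
      simp [f, hab, hac, had, hbc, hbd, hcd, hab.symm, hac.symm, had.symm, hbc.symm, hbd.symm,
        hcd.symm]
  have hinj : f.Injective := fun i j hij => by_contra fun hne => ((hf i j).2 hne).ne hij
  have hsurj : f.Surjective := fun y => by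
    rcases (hconn.preconnected a y).mem_of_forall_adj hK (by simp) with rfl | rfl | rfl | rfl
    exacts [⟨0, rfl⟩, ⟨1, rfl⟩, ⟨2, rfl⟩, ⟨3, rfl⟩]
  exact ⟨RelIso.symm ⟨Equiv.ofBijective f ⟨hinj, hsurj⟩, fun {i j} => hf i j⟩⟩

def SimpleGraph.triangleGraph (G : SimpleGraph V) : SimpleGraph V where
  Adj x y := G.Adj x y ∧ ∃ u, G.Adj x u ∧ G.Adj y u
  symm := ⟨fun _ _ ⟨hxy, u, hxu, hyu⟩ => ⟨hxy.symm, u, hyu, hxu⟩⟩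
  loopless := ⟨fun _ h => h.1.ne rfl⟩

def IsTriangleClosed (G : SimpleGraph V) (S : Set V) : Prop :=
  ∀ ⦃x y⦄, x ∈ S → G.triangleGraph.Adj x y → y ∈ S

variable {S : Set V}

theorem exists_adj_adj_of_mem (hS : InducesTriangle G S ∨ InducesDiamond G S) {x : V}
    (hx : x ∈ S) : ∃ y ∈ S, ∃ z ∈ S, y ≠ z ∧ G.Adj x y ∧ G.Adj x z := by
  rcases hS with ⟨a, b, c, rfl, -, -, -, hab, hac, hbc⟩ |
    ⟨a, b, c, d, rfl, -, -, -, -, -, -, -, hac, had, hbc, hbd, hcd⟩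
  · rcases hx with rfl | rfl | rfl
    exacts [⟨b, by simp, c, by simp, hbc.ne, hab, hac⟩,
      ⟨a, by simp, c, by simp, hac.ne, hab.symm, hbc⟩,
      ⟨a, by simp, b, by simp, hab.ne, hac.symm, hbc.symm⟩]
  · rcases hx with rfl | rfl | rfl | rfl
    exacts [⟨c, by simp, d, by simp, hcd.ne, hac, had⟩,
      ⟨c, by simp, d, by simp, hcd.ne, hbc, hbd⟩,
      ⟨a, by simp, d, by simp, had.ne, hac.symm, hcd⟩,
      ⟨a, by simp, c, by simp, hac.ne, had.symm, hcd.symm⟩]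

theorem exists_forall_triangleGraph_reachable (hS : InducesTriangle G S ∨ InducesDiamond G S) :
    ∃ c, ∀ x ∈ S, G.triangleGraph.Reachable x c := by
  rcases hS with ⟨a, b, c, rfl, -, -, -, hab, hac, hbc⟩ |
    ⟨a, b, c, d, rfl, -, -, -, -, -, -, -, hac, had, hbc, hbd, hcd⟩
  · refine ⟨a, ?_⟩
    rintro x (rfl | rfl | rfl)
    exacts [.rfl, Adj.reachable ⟨hab.symm, c, hbc, hac⟩,
      Adj.reachable ⟨hac.symm, b, hbc.symm, hab⟩]
  · refine ⟨c, ?_⟩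
    rintro x (rfl | rfl | rfl | rfl)
    exacts [Adj.reachable ⟨hac, d, had, hcd⟩, Adj.reachable ⟨hbc, d, hbd, hcd⟩, .rfl,
      Adj.reachable ⟨hcd.symm, a, had.symm, hac.symm⟩]

theorem IsTriangleClosed.setOf_reachable_eq (hC : IsTriangleClosed G S)
    (hS : InducesTriangle G S ∨ InducesDiamond G S) {v : V} (hv : v ∈ S) :
    {x | G.triangleGraph.Reachable x v} = S := by
  obtain ⟨c, hc⟩ := exists_forall_triangleGraph_reachable hS
  ext x
  exact ⟨fun h => h.symm.mem_of_forall_adj hC hv, fun hx => (hc x hx).trans (hc v hv).symm⟩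

theorem IsCubic.mem_of_adj_of_notMem (hG : IsCubic G)
    (hS : InducesTriangle G S ∨ InducesDiamond G S) {x w u : V} (hx : x ∈ S) (hw : w ∉ S)
    (hxw : G.Adj x w) (hxu : G.Adj x u) (huw : u ≠ w) : u ∈ S := by
  obtain ⟨y, hy, z, hz, hyz, hxy, hxz⟩ := exists_adj_adj_of_mem hS hx
  rcases hG.eq_or_eq_or_eq_of_adj hxy hxz hxw hyz (ne_of_mem_of_not_mem hy hw)
    (ne_of_mem_of_not_mem hz hw) hxu with rfl | rfl | rfl
  exacts [hy, hz, absurd rfl huw]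

theorem IsCubic.isTriangleClosed_of_mem_partition (hG : IsCubic G) {P : Set (Set V)}
    (hP : Setoid.IsPartition P) (hPS : ∀ S ∈ P, InducesTriangle G S ∨ InducesDiamond G S)
    (hS : S ∈ P) : IsTriangleClosed G S := by
  rintro x w hx ⟨hxw, u, hxu, hwu⟩
  obtain ⟨T, ⟨hT, hwT⟩, -⟩ := hP.2 w
  by_contra hwS
  have hxT : x ∉ T := fun hxT => hwS (Setoid.eq_of_mem_eqv_class hP.2 hT hxT hS hx ▸ hwT)
  have huS := hG.mem_of_adj_of_notMem (hPS S hS) hx hwS hxw hxu hwu.ne'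
  have huT := hG.mem_of_adj_of_notMem (hPS T hT) hwT hxT hxw.symm hwu hxu.ne'
  exact hwS (Setoid.eq_of_mem_eqv_class hP.2 hT huT hS huS ▸ hwT)

theorem IsCubic.setOf_reachable_eq_of_mem_partition (hG : IsCubic G) {P : Set (Set V)}
    (hP : Setoid.IsPartition P) (hPS : ∀ S ∈ P, InducesTriangle G S ∨ InducesDiamond G S)
    (hS : S ∈ P) {v : V} (hv : v ∈ S) : {x | G.triangleGraph.Reachable x v} = S :=
  (hG.isTriangleClosed_of_mem_partition hP hPS hS).setOf_reachable_eq (hPS S hS) hv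

theorem IsCubic.isTriangleClosed_of_forall_notMem (hG : IsCubic G)
    (hS : InducesTriangle G S ∨ InducesDiamond G S)
    (h : ∀ w ∉ S, ∀ ⦃x u⦄, x ∈ S → u ∈ S → G.Adj x u → G.Adj x w → G.Adj u w → False) :
    IsTriangleClosed G S := by
  rintro x w hx ⟨hxw, u, hxu, hwu⟩
  by_contra hwS
  exact h w hwS hx (hG.mem_of_adj_of_notMem hS hx hwS hxw hxu hwu.ne') hxu hxw hwu.symm

theorem IsCubic.isTriangleClosed_triangle (hG : IsCubic G) {x y z : V} (hxy : G.Adj x y)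
    (hxz : G.Adj x z) (hyz : G.Adj y z) (hx : ∀ w, G.Adj y w → G.Adj z w → w = x)
    (hy : ∀ w, G.Adj x w → G.Adj z w → w = y) (hz : ∀ w, G.Adj x w → G.Adj y w → w = z) :
    IsTriangleClosed G {x, y, z} := by
  refine hG.isTriangleClosed_of_forall_notMem
    (.inl ⟨x, y, z, rfl, hxy.ne, hxz.ne, hyz.ne, hxy, hxz, hyz⟩)
    fun w hw s t hs ht hst hsw htw => hw ?_
  rcases hs with rfl | rfl | rfl <;> rcases ht with rfl | rfl | rfl
  all_goals first
    | exact absurd hst (G.loopless.irrefl _)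
    | simp [hx w hsw htw] | simp [hx w htw hsw] | simp [hy w hsw htw]
    | simp [hy w htw hsw] | simp [hz w hsw htw] | simp [hz w htw hsw]

theorem IsCubic.isTriangleClosed_diamond (hG : IsCubic G) {p q r s : V} (hpq : p ≠ q)
    (hnpq : ¬G.Adj p q) (hpr : G.Adj p r) (hps : G.Adj p s) (hqr : G.Adj q r)
    (hqs : G.Adj q s) (hrs : G.Adj r s) :
    IsTriangleClosed G {p, q, r, s} := by
  refine hG.isTriangleClosed_of_forall_notMem
    (.inr ⟨p, q, r, s, rfl, hpq, hpr.ne, hps.ne, hqr.ne, hqs.ne, hrs.ne, hnpq, hpr, hps, hqr,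
      hqs, hrs⟩) fun w hw x u hx hu hxu hxw huw => ?_
  -- `r` and `s` have all their neighbours inside the diamond
  have hpq_of_adj : ∀ y ∈ ({p, q, r, s} : Set V), G.Adj y w → y = p ∨ y = q := by
    rintro y (rfl | rfl | rfl | rfl) hyw
    · exact .inl rfl
    · exact .inr rfl
    · rcases hG.eq_or_eq_or_eq_of_adj hpr.symm hqr.symm hrs hpq hps.ne hqs.ne hyw with
        rfl | rfl | rfl <;> simp at hw
    · rcases hG.eq_or_eq_or_eq_of_adj hps.symm hqs.symm hrs.symm hpq hpr.ne hqr.ne hyw with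
        rfl | rfl | rfl <;> simp at hw
  rcases hpq_of_adj x hx hxw with rfl | rfl <;> rcases hpq_of_adj u hu huw with rfl | rfl
  exacts [hxu.ne rfl, hnpq hxu, hnpq hxu.symm, hxu.ne rfl]

theorem exists_mem_isTriangleClosed (hconn : G.Connected) (hcf : ClawFree G) (hG : IsCubic G)
    (hK4 : ¬Nonempty (G ≃g (⊤ : SimpleGraph (Fin 4)))) (v : V) :
    ∃ S, v ∈ S ∧ (InducesTriangle G S ∨ InducesDiamond G S) ∧ IsTriangleClosed G S := by
  have diamond : ∀ {p q r s : V}, p ≠ q → G.Adj p r → G.Adj p s → G.Adj q r → G.Adj q s →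
      G.Adj r s → (InducesTriangle G {p, q, r, s} ∨ InducesDiamond G {p, q, r, s}) ∧
        IsTriangleClosed G {p, q, r, s} := by
    intro p q r s hpq hpr hps hqr hqs hrs
    have hnpq : ¬G.Adj p q := fun h => hK4 (hG.nonempty_iso_top hconn h hpr hps hqr hqs hrs)
    exact ⟨.inr ⟨p, q, r, s, rfl, hpq, hpr.ne, hps.ne, hqr.ne, hqs.ne, hrs.ne, hnpq, hpr, hps,
      hqr, hqs, hrs⟩, hG.isTriangleClosed_diamond hpq hnpq hpr hps hqr hqs hrs⟩
  obtain ⟨a, b, hva, hvb, hab⟩ := hcf.exists_adj_adj_adj hG v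
  by_cases h₁ : ∃ w, G.Adj a w ∧ G.Adj b w ∧ w ≠ v
  · obtain ⟨w, haw, hbw, hwv⟩ := h₁
    exact ⟨{v, w, a, b}, by simp, diamond hwv.symm hva hvb haw.symm hbw.symm hab⟩
  by_cases h₂ : ∃ w, G.Adj v w ∧ G.Adj b w ∧ w ≠ a
  · obtain ⟨w, hvw, hbw, hwa⟩ := h₂
    exact ⟨{a, w, v, b}, by simp, diamond hwa.symm hva.symm hab hvw.symm hbw.symm hvb⟩
  by_cases h₃ : ∃ w, G.Adj v w ∧ G.Adj a w ∧ w ≠ b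
  · obtain ⟨w, hvw, haw, hwb⟩ := h₃
    exact ⟨{b, w, v, a}, by simp, diamond hwb.symm hvb.symm hab.symm hvw.symm haw.symm hva⟩
  push Not at h₁ h₂ h₃
  exact ⟨{v, a, b}, by simp, .inl ⟨v, a, b, rfl, hva.ne, hvb.ne, hab.ne, hva, hvb, hab⟩,
    hG.isTriangleClosed_triangle hva hvb hab h₁ h₂ h₃⟩

end

theorem exists_unique_triangle_diamond_partition_general {V : Type*}
    (G : SimpleGraph V) (hconn : G.Connected) (hcf : ClawFree G) (hcubic : IsCubic G)
    (hK4 : ¬ Nonempty (G ≃g (⊤ : SimpleGraph (Fin 4)))) :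
    ∃! P : Set (Set V), Setoid.IsPartition P ∧
      ∀ S ∈ P, InducesTriangle G S ∨ InducesDiamond G S := by
  refine ⟨G.triangleGraph.reachableSetoid.classes,
    ⟨Setoid.isPartition_classes _, ?_⟩, fun Q ⟨hQ, hQS⟩ => ?_⟩
  · rintro _ ⟨v, rfl⟩
    obtain ⟨S, hv, hS, hC⟩ := exists_mem_isTriangleClosed hconn hcf hcubic hK4 v
    exact hC.setOf_reachable_eq hS hv ▸ hS
  · ext S
    refine ⟨fun hS => ?_, fun ⟨v, hSv⟩ => ?_⟩
    · obtain ⟨v, hv⟩ := Setoid.nonempty_of_mem_partition hQ hS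
      exact ⟨v, (hcubic.setOf_reachable_eq_of_mem_partition hQ hQS hS hv).symm⟩
    · obtain ⟨T, ⟨hT, hvT⟩, -⟩ := hQ.2 v
      exact hSv ▸ hcubic.setOf_reachable_eq_of_mem_partition hQ hQS hT hvT ▸ hT

/-- If `G ≠ K₄` is a connected, claw-free, cubic graph, then `V(G)` has a unique
partition into sets each of which induces a triangle or a diamond in `G`. -/
theorem exists_unique_triangle_diamond_partition {V : Type*} [Fintype V]
    (G : SimpleGraph V) (hconn : G.Connected) (hcf : ClawFree G) (hcubic : IsCubic G)
    (hK4 : ¬ Nonempty (G ≃g (⊤ : SimpleGraph (Fin 4)))) :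
    ∃! P : Set (Set V), Setoid.IsPartition P ∧
      ∀ S ∈ P, InducesTriangle G S ∨ InducesDiamond G S :=
  exists_unique_triangle_diamond_partition_general G hconn hcf hcubic hK4
end
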